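/- For every δ > 0 there exists a frog-strategy S such that Succ(S, A_{ws}) ≥ 1 − δ, where A_{ws} is the set of weakly sparse sequences. -/

import Mathlib

/-- A frog-strategy: for each infinite binary sequence `b` (0-indexed: `b i` is bit `b_{i+1}`),
a probability distribution on `ℕ ∪ {∞}`, where `some i` means "cross at minute `i+1`" and
`none` means "wait forever".  The distribution at minute `i+1` may depend only on the
first `i` bits of `b`. -/
structure FrogStrategy where
  prob : (ℕ → Bool) → Option ℕ → ℝ
  nonneg : ∀ b o, 0 ≤ prob b o
  total : ∀ b, ∑' o : Option ℕ, prob b o = 1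
  adapted : ∀ b b' : ℕ → Bool, ∀ i : ℕ,
    (∀ j, j < i → b j = b' j) → prob b (some i) = prob b' (some i)

/-- Success probability: total probability of crossing at a minute with no car. -/
noncomputable def succProb (S : FrogStrategy) (b : ℕ → Bool) : ℝ :=
  ∑' i : ℕ, if b i = false then S.prob b (some i) else 0

/-- Death probability: total probability of crossing at a minute with a car. -/
noncomputable def deathProb (S : FrogStrategy) (b : ℕ → Bool) : ℝ :=
  ∑' i : ℕ, if b i = true then S.prob b (some i) else 0

/-- `cars b t` is `N_t(b) = b_1 + ⋯ + b_t`, the number of cars among the first `t` minutes. -/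
def cars (b : ℕ → Bool) (t : ℕ) : ℕ :=
  ((Finset.range t).filter (fun i => b i = true)).card

/-- `b` is `ε`-weakly sparse if `lim_{s→∞} inf_{t ≥ s} N_t(b)/t ≤ ε`. -/
def epsWeaklySparse (ε : ℝ) (b : ℕ → Bool) : Prop :=
  Filter.liminf (fun t : ℕ => (cars b t : ℝ) / t) Filter.atTop ≤ ε

/-- `b` is weakly sparse if `lim_{s→∞} inf_{t ≥ s} N_t(b)/t = 0`. -/
def weaklySparse (b : ℕ → Bool) : Prop :=
  Filter.liminf (fun t : ℕ => (cars b t : ℝ) / t) Filter.atTop = 0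

/-!
At minute `i` the frog crosses with probability `γ 2⁻ⁱ + γ W`, capped by the mass it has not
spent yet, where the bankroll `W` collects the stakes of free minutes and is halved by every car.
A car costs at most `γ 2⁻ⁱ + γ W` and removes `γ W` from `2 γ W`, so the deaths are bounded by the
seeds `∑ γ 2⁻ⁱ ≤ 2 γ` plus `2 γ` times the successes, i.e. by `4 γ`. If some mass were never spent,
the cap would never bite, which forces `γ W ≤ 1`; but then `W` grows by the factor `1 + γ` at
every free minute and only halves at a car, so it explodes along the times where the car density
is small. Hence on weakly sparse streams all the mass is spent, and the frog survives with
probability at least `1 - 4 γ`.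
-/

open Filter Finset

theorem hasSum_option_elim {α β : Type*} [AddCommMonoid α] [TopologicalSpace α] [ContinuousAdd α]
    {f : β → α} {s : α} (hf : HasSum f s) (a : α) :
    HasSum (fun o : Option β => o.elim a f) (a + s) := by
  have hsome : HasSum (fun o : Option β => o.elim 0 f) s :=
    ((Option.some_injective β).hasSum_iff
      (by rintro (_ | i) h; exacts [rfl, absurd ⟨i, rfl⟩ h])).mp hf
  convert (hasSum_ite_eq none a).add hsome using 1
  funext o
  cases o <;> simp

namespace FrogStrategy

noncomputable def ofSubProb (p : (ℕ → Bool) → ℕ → ℝ) (nonneg : ∀ b i, 0 ≤ p b i)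
    (summable : ∀ b, Summable (p b)) (tsum_le_one : ∀ b, ∑' i, p b i ≤ 1)
    (adapted : ∀ b b' : ℕ → Bool, ∀ i : ℕ, (∀ j, j < i → b j = b' j) → p b i = p b' i) :
    FrogStrategy where
  prob b o := o.elim (1 - ∑' i, p b i) (p b)
  nonneg b o := by
    cases o
    · exact sub_nonneg.mpr (tsum_le_one b)
    · exact nonneg b _
  total b := ((hasSum_option_elim (summable b).hasSum _).tsum_eq).trans (sub_add_cancel _ _)
  adapted := adapted

theorem summable_prob_some (S : FrogStrategy) (b : ℕ → Bool) :
    Summable fun i => S.prob b (some i) := by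
  have hS : Summable (S.prob b) := by
    by_contra h
    simpa [tsum_eq_zero_of_not_summable h] using S.total b
  exact hS.comp_injective (Option.some_injective ℕ)

theorem succProb_add_deathProb (S : FrogStrategy) (b : ℕ → Bool) :
    succProb S b + deathProb S b = ∑' i, S.prob b (some i) := by
  have hrestrict (c : Bool) : Summable fun i => if b i = c then S.prob b (some i) else 0 :=
    (S.summable_prob_some b).of_nonneg_of_le (fun i => by split_ifs <;> simp [S.nonneg])
      (fun i => by split_ifs <;> simp [S.nonneg])
  rw [succProb, deathProb, ← (hrestrict false).tsum_add (hrestrict true)]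
  exact tsum_congr fun i => by cases b i <;> simp

end FrogStrategy

theorem cars_succ (b : ℕ → Bool) (t : ℕ) : cars b (t + 1) = cars b t + if b t then 1 else 0 := by
  unfold cars
  rw [range_add_one, filter_insert]
  split_ifs with hb
  · exact card_insert_of_notMem (by simp)
  · rfl

theorem cars_le (b : ℕ → Bool) (t : ℕ) : cars b t ≤ t :=
  (card_filter_le _ _).trans (card_range t).le

theorem exists_eq_false_of_cars_lt {b : ℕ → Bool} {t : ℕ} (h : cars b t < t) :
    ∃ i < t, b i = false := by
  by_contra! hall
  have : cars b t = t := by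
    rw [cars, filter_true_of_mem fun i hi => by simpa using hall i (mem_range.mp hi), card_range]
  omega

theorem weaklySparse.frequently_cars_lt {b : ℕ → Bool} (hb : weaklySparse b) {ε : ℝ}
    (hε : 0 < ε) : ∃ᶠ t in atTop, (cars b t : ℝ) < ε * t := by
  have hcobdd : IsCoboundedUnder (· ≥ ·) atTop fun t : ℕ => (cars b t : ℝ) / t :=
    isCoboundedUnder_ge_of_le atTop (x := 1) fun t =>
      div_le_one_of_le₀ (by exact_mod_cast cars_le b t) t.cast_nonneg
  have hratio := frequently_lt_of_liminf_lt hcobdd (hb.symm ▸ hε)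
  refine (hratio.and_eventually (eventually_gt_atTop 0)).mono fun t ⟨hlt, ht⟩ => ?_
  exact (div_lt_iff₀ (by exact_mod_cast ht)).mp hlt

theorem weaklySparse.exists_eq_false {b : ℕ → Bool} (hb : weaklySparse b) : ∃ i, b i = false := by
  obtain ⟨t, ht⟩ := (hb.frequently_cars_lt one_pos).exists
  rw [one_mul] at ht
  obtain ⟨i, -, hi⟩ := exists_eq_false_of_cars_lt (b := b) (t := t) (by exact_mod_cast ht)
  exact ⟨i, hi⟩

theorem exists_forall_mul_two_pow_lt_pow {a : ℝ} (ha : 1 < a) (B : ℝ) :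
    ∃ ε > 0, ∀ᶠ t : ℕ in atTop, ∀ N : ℕ, (N : ℝ) < ε * t → B * 2 ^ N < a ^ (t - N) := by
  obtain ⟨m, hm⟩ := pow_unbounded_of_one_lt 2 ha
  obtain ⟨k, hk⟩ := pow_unbounded_of_one_lt B ha
  refine ⟨(2 * (m + 1))⁻¹, by positivity, (eventually_ge_atTop (2 * k)).mono fun t ht N hN => ?_⟩
  have hNt : 2 * (m * N) + 2 * N < t := by
    rw [lt_inv_mul_iff₀ (by positivity)] at hN
    exact_mod_cast (by linarith : (2 * (m * N) + 2 * N : ℝ) < t)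
  have hexp : k + m * N ≤ t - N := by generalize m * N = P at hNt ⊢; omega
  calc B * 2 ^ N < a ^ k * 2 ^ N := by gcongr
    _ ≤ a ^ k * (a ^ m) ^ N := by gcongr
    _ = a ^ (k + m * N) := by rw [pow_add, pow_mul]
    _ ≤ a ^ (t - N) := pow_le_pow_right₀ ha.le hexp

namespace Bankroll

noncomputable def seed (γ : ℝ) (i : ℕ) : ℝ := γ * (1 / 2) ^ i

noncomputable def step (γ : ℝ) (car : Bool) (i : ℕ) (s : ℝ × ℝ) : ℝ × ℝ :=
  let p := min s.1 (seed γ i + γ * s.2)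
  (s.1 - p, if car then s.2 / 2 else s.2 + p)

/-- `state γ b i = (remaining γ b i, bankroll γ b i)`: the crossing mass not yet spent before
minute `i`, and the bankroll `W`. -/
noncomputable def state (γ : ℝ) (b : ℕ → Bool) : ℕ → ℝ × ℝ
  | 0 => (1, 0)
  | i + 1 => step γ (b i) i (state γ b i)

noncomputable def remaining (γ : ℝ) (b : ℕ → Bool) (i : ℕ) : ℝ := (state γ b i).1

noncomputable def bankroll (γ : ℝ) (b : ℕ → Bool) (i : ℕ) : ℝ := (state γ b i).2

noncomputable def bet (γ : ℝ) (b : ℕ → Bool) (i : ℕ) : ℝ :=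
  min (remaining γ b i) (seed γ i + γ * bankroll γ b i)

variable {γ : ℝ} {b : ℕ → Bool}

theorem remaining_zero : remaining γ b 0 = 1 := rfl

theorem bankroll_zero : bankroll γ b 0 = 0 := rfl

theorem remaining_succ (i : ℕ) : remaining γ b (i + 1) = remaining γ b i - bet γ b i := rfl

theorem bankroll_succ (i : ℕ) :
    bankroll γ b (i + 1) = if b i then bankroll γ b i / 2 else bankroll γ b i + bet γ b i := rfl

theorem seed_pos (hγ : 0 < γ) (i : ℕ) : 0 < seed γ i := by unfold seed; positivity

theorem seed_nonneg (hγ : 0 ≤ γ) (i : ℕ) : 0 ≤ seed γ i := by unfold seed; positivity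

theorem sum_range_seed_le (hγ : 0 ≤ γ) (t : ℕ) : ∑ i ∈ range t, seed γ i ≤ 2 * γ := by
  simp only [seed, ← mul_sum]
  nlinarith [sum_geometric_two_le t]

theorem bet_le_remaining (i : ℕ) : bet γ b i ≤ remaining γ b i := min_le_left _ _

theorem remaining_nonneg (i : ℕ) : 0 ≤ remaining γ b i := by
  cases i with
  | zero => simp [remaining_zero]
  | succ i => simpa [remaining_succ] using bet_le_remaining i

theorem bankroll_nonneg (hγ : 0 ≤ γ) (i : ℕ) : 0 ≤ bankroll γ b i := by
  induction i with
  | zero => exact le_rfl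
  | succ i ih =>
    have hbet : 0 ≤ bet γ b i :=
      le_min (remaining_nonneg i) (add_nonneg (seed_nonneg hγ i) (mul_nonneg hγ ih))
    rw [bankroll_succ]
    split_ifs <;> positivity

theorem bet_nonneg (hγ : 0 ≤ γ) (i : ℕ) : 0 ≤ bet γ b i :=
  le_min (remaining_nonneg i)
    (add_nonneg (seed_nonneg hγ i) (mul_nonneg hγ (bankroll_nonneg hγ i)))

theorem sum_range_bet (t : ℕ) : ∑ i ∈ range t, bet γ b i = 1 - remaining γ b t := by
  induction t with
  | zero => simp [remaining_zero]
  | succ t ih => rw [sum_range_succ, ih, remaining_succ]; ring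

theorem sum_range_bet_le_one (t : ℕ) : ∑ i ∈ range t, bet γ b i ≤ 1 := by
  linarith [sum_range_bet (γ := γ) (b := b) t, remaining_nonneg (γ := γ) (b := b) t]

theorem summable_bet (hγ : 0 ≤ γ) : Summable (bet γ b) :=
  summable_of_sum_range_le (bet_nonneg hγ) sum_range_bet_le_one

theorem tsum_bet_le_one (hγ : 0 ≤ γ) : ∑' i, bet γ b i ≤ 1 :=
  Real.tsum_le_of_sum_range_le (bet_nonneg hγ) sum_range_bet_le_one

theorem state_congr {b' : ℕ → Bool} {i : ℕ} (h : ∀ j, j < i → b j = b' j) :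
    state γ b i = state γ b' i := by
  induction i with
  | zero => rfl
  | succ i ih =>
    simp only [state, h i i.lt_add_one, ih fun j hj => h j (hj.trans i.lt_add_one)]

theorem bet_congr {b' : ℕ → Bool} {i : ℕ} (h : ∀ j, j < i → b j = b' j) :
    bet γ b i = bet γ b' i := by
  simp only [bet, remaining, bankroll, state_congr h]

theorem sum_car_bets_add_bankroll_le (hγ : 0 ≤ γ) (t : ℕ) :
    (∑ i ∈ range t, if b i = true then bet γ b i else 0) + 2 * γ * bankroll γ b t ≤
      (∑ i ∈ range t, seed γ i) + 2 * γ * ∑ i ∈ range t, if b i = false then bet γ b i else 0 := by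
  induction t with
  | zero => simp [bankroll_zero]
  | succ t ih =>
    simp only [sum_range_succ, bankroll_succ]
    have hbet : bet γ b t ≤ seed γ t + γ * bankroll γ b t := min_le_right _ _
    cases b t <;> simp only [Bool.false_eq_true, Bool.true_eq_false, ↓reduceIte] <;>
      nlinarith [seed_nonneg hγ t]

theorem tsum_car_bets_le (hγ : 0 ≤ γ) : ∑' i, (if b i = true then bet γ b i else 0) ≤ 4 * γ := by
  refine Real.tsum_le_of_sum_range_le (fun i => ite_nonneg (bet_nonneg hγ i) le_rfl) fun t => ?_
  have hsucc : (∑ i ∈ range t, if b i = false then bet γ b i else 0) ≤ 1 :=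
    (sum_le_sum fun i _ => by split_ifs; exacts [le_rfl, bet_nonneg hγ i]).trans
      (sum_range_bet_le_one t)
  nlinarith [sum_car_bets_add_bankroll_le (b := b) hγ t, sum_range_seed_le hγ t,
    bankroll_nonneg (b := b) hγ t]

theorem remaining_le_one (hγ : 0 ≤ γ) (i : ℕ) : remaining γ b i ≤ 1 := by
  linarith [sum_range_bet (γ := γ) (b := b) i,
    sum_nonneg fun j (_ : j ∈ range i) => bet_nonneg (b := b) hγ j]

theorem bet_eq_of_remaining_succ_pos {i : ℕ} (h : 0 < remaining γ b (i + 1)) :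
    bet γ b i = seed γ i + γ * bankroll γ b i := by
  rcases le_total (remaining γ b i) (seed γ i + γ * bankroll γ b i) with hle | hle
  · rw [remaining_succ, bet, min_eq_left hle] at h
    exact absurd h (by simp)
  · exact min_eq_right hle

/-- A car halves `W` and doubles `2 ^ N`; a free minute multiplies `W` by at least `1 + γ`. -/
theorem monotone_bankroll_mul_two_pow_div (hγ : 0 ≤ γ)
    (hbet : ∀ i, γ * bankroll γ b i ≤ bet γ b i) :
    Monotone fun t => bankroll γ b t * 2 ^ cars b t / (1 + γ) ^ (t - cars b t) := by
  refine monotone_nat_of_le_succ fun t => ?_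
  have hN := cars_le b t
  simp only [cars_succ, bankroll_succ]
  cases b t
  · rw [if_neg Bool.false_ne_true, if_neg Bool.false_ne_true, add_zero,
      show t + 1 - cars b t = t - cars b t + 1 by omega, pow_succ,
      show ∀ x y z w : ℝ, x * y / (z * w) = x / w * y / z from fun _ _ _ _ => by ring]
    have hgrowth : bankroll γ b t ≤ (bankroll γ b t + bet γ b t) / (1 + γ) := by
      rw [le_div_iff₀ (by linarith)]
      linarith [hbet t]
    exact div_le_div_of_nonneg_right (mul_le_mul_of_nonneg_right hgrowth (by positivity))
      (pow_nonneg (by linarith) _)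
  · rw [if_pos rfl, if_pos rfl, show t + 1 - (cars b t + 1) = t - cars b t by omega, pow_succ]
    apply le_of_eq
    ring

theorem bankroll_unbounded (hγ : 0 < γ) (hb : weaklySparse b)
    (huncapped : ∀ i, bet γ b i = seed γ i + γ * bankroll γ b i) (B : ℝ) :
    ∃ t, B < bankroll γ b t := by
  set V := fun t => bankroll γ b t * 2 ^ cars b t / (1 + γ) ^ (t - cars b t)
  have hV : Monotone V := monotone_bankroll_mul_two_pow_div hγ.le fun i => by
    rw [huncapped]; linarith [seed_pos hγ i]
  obtain ⟨i₀, hi₀⟩ := hb.exists_eq_false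
  have hV₀ : 0 < V (i₀ + 1) := by
    have : 0 < bankroll γ b (i₀ + 1) := by
      rw [bankroll_succ, hi₀, if_neg Bool.false_ne_true, huncapped]
      nlinarith [seed_pos hγ i₀, bankroll_nonneg (b := b) hγ.le i₀]
    positivity
  obtain ⟨ε, hε, hlarge⟩ :=
    exists_forall_mul_two_pow_lt_pow (a := 1 + γ) (by linarith) (B / V (i₀ + 1))
  obtain ⟨t, hsparse, hbig, ht⟩ :=
    ((hb.frequently_cars_lt hε).and_eventually (hlarge.and (eventually_ge_atTop (i₀ + 1)))).exists
  refine ⟨t, lt_of_mul_lt_mul_right ?_ (by positivity : (0 : ℝ) ≤ 2 ^ cars b t)⟩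
  calc B * 2 ^ cars b t < V (i₀ + 1) * (1 + γ) ^ (t - cars b t) := by
        have := hbig _ hsparse
        rwa [div_mul_eq_mul_div, div_lt_iff₀ hV₀, mul_comm _ (V (i₀ + 1))] at this
    _ ≤ V t * (1 + γ) ^ (t - cars b t) := by gcongr; exact hV ht
    _ = bankroll γ b t * 2 ^ cars b t := by simp only [V]; field_simp

theorem tsum_bet_eq_one (hγ : 0 < γ) (hb : weaklySparse b) : ∑' i, bet γ b i = 1 := by
  by_contra hne
  have hlt : ∑' i, bet γ b i < 1 := (tsum_bet_le_one hγ.le).lt_of_ne hne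
  have hpos (i : ℕ) : 0 < remaining γ b i := by
    linarith [sum_range_bet (γ := γ) (b := b) i,
      (summable_bet hγ.le).sum_le_tsum (range i) fun j _ => bet_nonneg (b := b) hγ.le j]
  have huncapped (i : ℕ) := bet_eq_of_remaining_succ_pos (hpos (i + 1))
  obtain ⟨t, ht⟩ := bankroll_unbounded hγ hb huncapped (1 / γ)
  have hbounded : γ * bankroll γ b t ≤ 1 := by
    linarith [huncapped t ▸ bet_le_remaining (γ := γ) (b := b) t,
      remaining_le_one (b := b) hγ.le t, seed_pos hγ t]
  rw [div_lt_iff₀ hγ] at ht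
  linarith

noncomputable def strategy (hγ : 0 ≤ γ) : FrogStrategy :=
  FrogStrategy.ofSubProb (bet γ) (fun _ => bet_nonneg hγ) (fun _ => summable_bet hγ)
    (fun _ => tsum_bet_le_one hγ) fun _ _ _ => bet_congr

end Bankroll

/-- Puzzle 3: for every `δ > 0` there is a frog-strategy succeeding with probability
`≥ 1 - δ` on every weakly sparse car-stream, i.e. `Succ(S, A_{ws}) ≥ 1 - δ`. -/
theorem puzzle3 (δ : ℝ) (hδ : 0 < δ) :
    ∃ S : FrogStrategy, ∀ b : ℕ → Bool, weaklySparse b → 1 - δ ≤ succProb S b := by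
  have hγ : 0 < δ / 4 := by positivity
  refine ⟨Bankroll.strategy hγ.le, fun b hb => ?_⟩
  have hsplit := (Bankroll.strategy hγ.le).succProb_add_deathProb b
  have htotal : ∑' i, (Bankroll.strategy hγ.le).prob b (some i) = 1 :=
    Bankroll.tsum_bet_eq_one hγ hb
  have hdeath : deathProb (Bankroll.strategy hγ.le) b ≤ 4 * (δ / 4) :=
    Bankroll.tsum_car_bets_le hγ.le
  linarith
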